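/- arXiv:2507.04824 — 3 statements merged into one kernel-verified Lean document; each statement's English description precedes it below -/
import Mathlib

section
/- Let W be a real symmetric positive definite 2×2 matrix, D the antisymmetric matrix with D₁₂ = d, D₂₁ = −d, and F a real symmetric invertible 2×2 matrix. Then the trace norm of √W F⁻¹ D F⁻¹ √W equals 2√(det W) · |d| / |det F|. -/
/-! Since `√W` and `F⁻¹` are symmetric, `M = √W F⁻¹ D F⁻¹ √W` is antisymmetric like `D`. A real
antisymmetric 2×2 matrix satisfies `MᵀM = det M • 1`, so both singular values of `M` equal
`√(det M)`, and `det M = det W · d² / (det F)²`. -/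

open Matrix

/-- The positive semidefinite square root of a positive semidefinite matrix
(the definition `Matrix.PosSemidef.sqrt` of Mathlib of December 2024, since removed). -/
noncomputable def Matrix.PosSemidef.sqrt {n 𝕜 : Type*} [Fintype n] [DecidableEq n] [RCLike 𝕜]
    [PartialOrder 𝕜] {A : Matrix n n 𝕜} (hA : A.PosSemidef) : Matrix n n 𝕜 :=
  hA.1.eigenvectorUnitary.1 * diagonal ((↑) ∘ (√·) ∘ hA.1.eigenvalues) *
  (star hA.1.eigenvectorUnitary : Matrix n n 𝕜)

/-- Trace norm of a real 2×2 matrix: `Tr √(AᵀA)`. -/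
noncomputable def traceNorm (A : Matrix (Fin 2) (Fin 2) ℝ) : ℝ :=
  (Matrix.posSemidef_conjTranspose_mul_self A).sqrt.trace

namespace Matrix.PosSemidef

variable {n : Type*} [Fintype n] [DecidableEq n] {A : Matrix n n ℝ}

theorem sqrt_eq_cfc (hA : A.PosSemidef) : hA.sqrt = cfc Real.sqrt A := by
  rw [hA.1.cfc_eq, IsHermitian.cfc, Unitary.conjStarAlgAut_apply]; rfl

theorem transpose_sqrt (hA : A.PosSemidef) : hA.sqrtᵀ = hA.sqrt := by
  rw [sqrt_eq_cfc, ← conjTranspose_eq_transpose_of_trivial]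
  exact cfc_predicate Real.sqrt A

theorem sqrt_mul_self (hA : A.PosSemidef) : hA.sqrt * hA.sqrt = A := by
  rw [sqrt_eq_cfc, ← cfc_mul Real.sqrt Real.sqrt A]
  conv_rhs => rw [← cfc_id ℝ A hA.1.isSelfAdjoint]
  refine cfc_congr fun x hx => ?_
  rw [hA.1.spectrum_real_eq_range_eigenvalues] at hx
  obtain ⟨i, rfl⟩ := hx
  exact Real.mul_self_sqrt (hA.eigenvalues_nonneg i)

theorem det_sqrt_mul_self (hA : A.PosSemidef) : hA.sqrt.det * hA.sqrt.det = A.det := by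
  rw [← det_mul, hA.sqrt_mul_self]

end Matrix.PosSemidef

theorem Matrix.eq_of_transpose_eq_neg_fin_two {M : Matrix (Fin 2) (Fin 2) ℝ} (hM : Mᵀ = -M) :
    M = !![0, M 0 1; -M 0 1, 0] := by
  have h : ∀ i j, M j i = -M i j := fun i j => congrFun (congrFun hM i) j
  ext i j; fin_cases i <;> fin_cases j <;> simp <;> linarith [h 0 0, h 1 1, h 0 1]

theorem Matrix.transpose_mul_self_of_transpose_eq_neg_fin_two {M : Matrix (Fin 2) (Fin 2) ℝ}
    (hM : Mᵀ = -M) : Mᵀ * M = algebraMap ℝ _ M.det := by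
  rw [eq_of_transpose_eq_neg_fin_two hM]
  ext i j; fin_cases i <;> fin_cases j <;> simp [Matrix.mul_apply, algebraMap_matrix_apply]

theorem traceNorm_of_transpose_eq_neg {M : Matrix (Fin 2) (Fin 2) ℝ} (hM : Mᵀ = -M) :
    traceNorm M = 2 * √M.det := by
  rw [traceNorm, PosSemidef.sqrt_eq_cfc, conjTranspose_eq_transpose_of_trivial,
    transpose_mul_self_of_transpose_eq_neg_fin_two hM, cfc_algebraMap,
    Algebra.algebraMap_eq_smul_one, trace_smul, trace_one]
  simp [mul_comm]

theorem stmt_6_general (W F : Matrix (Fin 2) (Fin 2) ℝ) (d : ℝ)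
    (hW : W.PosDef) (hF : F.IsSymm) :
    traceNorm (hW.posSemidef.sqrt * F⁻¹ * !![0, d; -d, 0] * F⁻¹ * hW.posSemidef.sqrt)
      = 2 * Real.sqrt W.det * |d| / |F.det| := by
  set S := hW.posSemidef.sqrt
  have hS : Sᵀ = S := hW.posSemidef.transpose_sqrt
  have hFinv : F⁻¹ᵀ = F⁻¹ := by rw [transpose_nonsing_inv, hF.eq]
  have hD : (!![0, d; -d, 0] : Matrix (Fin 2) (Fin 2) ℝ)ᵀ = -!![0, d; -d, 0] := by
    ext i j; fin_cases i <;> fin_cases j <;> simp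
  have hdet : (S * F⁻¹ * !![0, d; -d, 0] * F⁻¹ * S).det = W.det * d ^ 2 / F.det ^ 2 := by
    rw [← hW.posSemidef.det_sqrt_mul_self]
    simp only [det_mul, det_nonsing_inv, Ring.inverse_eq_inv', det_fin_two_of]
    ring
  have hskew :
      (S * F⁻¹ * !![0, d; -d, 0] * F⁻¹ * S)ᵀ = -(S * F⁻¹ * !![0, d; -d, 0] * F⁻¹ * S) := by
    simp only [transpose_mul, hS, hFinv, hD, Matrix.neg_mul, Matrix.mul_neg, Matrix.mul_assoc]
  rw [traceNorm_of_transpose_eq_neg hskew, hdet, Real.sqrt_div' _ (sq_nonneg _),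
    Real.sqrt_mul' _ (sq_nonneg d), Real.sqrt_sq_eq_abs, Real.sqrt_sq_eq_abs]
  ring

theorem stmt_6 (W F : Matrix (Fin 2) (Fin 2) ℝ) (d : ℝ)
    (hW : W.PosDef) (hF : F.IsSymm) (hFdet : F.det ≠ 0) :
    traceNorm (hW.posSemidef.sqrt * F⁻¹ * !![0, d; -d, 0] * F⁻¹ * hW.posSemidef.sqrt)
      = 2 * Real.sqrt W.det * |d| / |F.det| :=
  stmt_6_general W F d hW hF
end

section
/- Let G be a 2×2 real symmetric positive definite matrix with diagonal entries G₁₁ ≤ a and G₂₂ ≤ b for some a, b > 0, let F = diag(a, b), and let W = [[w₁₁, w₁₂],[w₁₂, w₂₂]] be symmetric positive definite with w₁₂ G₁₂ ≤ 0. Then Tr(W G⁻¹) ≥ w₁₁/a + w₂₂/b = Tr(W F⁻¹). -/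
/-!
Writing `G⁻¹ = adj G / det G`, `Tr(W G⁻¹) = (w₁₁ G₂₂ - 2 w₁₂ G₁₂ + w₂₂ G₁₁) / (G₁₁ G₂₂ - G₁₂²)`.
The cross term is nonnegative by the sign condition, and dropping it and `G₁₂²` leaves
`w₁₁ / G₁₁ + w₂₂ / G₂₂ ≥ w₁₁ / a + w₂₂ / b`.
-/

open Matrix

namespace Matrix

variable {K : Type*} [Field K]

theorem trace_mul_inv_fin_two (A G : Matrix (Fin 2) (Fin 2) K) :
    (A * G⁻¹).trace =
      (A 0 0 * G 1 1 - A 0 1 * G 1 0 - A 1 0 * G 0 1 + A 1 1 * G 0 0) / G.det := by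
  rw [inv_def, adjugate_fin_two, Ring.inverse_eq_inv', trace_fin_two]
  simp only [smul_apply, mul_apply, Fin.sum_univ_two, of_apply, cons_val', cons_val_zero,
    cons_val_one, empty_val', cons_val_fin_one, smul_eq_mul]
  ring

theorem trace_mul_inv_diagonal {n : Type*} [Fintype n] [DecidableEq n] (A : Matrix n n K)
    {d : n → K} (hd : ∀ i, d i ≠ 0) : (A * (diagonal d)⁻¹).trace = ∑ i, A i i / d i := by
  have hinv : (diagonal d)⁻¹ = diagonal d⁻¹ :=
    inv_eq_left_inv <| by rw [diagonal_mul_diagonal, ← diagonal_one]; simp [hd]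
  simp only [hinv, trace, diag_apply, mul_diagonal, Pi.inv_apply, div_eq_mul_inv]

end Matrix

theorem div_add_div_le_div_sub_sq {g₁₁ g₁₂ g₂₂ w₁₁ w₁₂ w₂₂ : ℝ}
    (hg₁₁ : 0 < g₁₁) (hg₂₂ : 0 < g₂₂) (hdet : 0 < g₁₁ * g₂₂ - g₁₂ ^ 2)
    (hw₁₁ : 0 ≤ w₁₁) (hw₂₂ : 0 ≤ w₂₂) (hwg : w₁₂ * g₁₂ ≤ 0) :
    w₁₁ / g₁₁ + w₂₂ / g₂₂ ≤
      (w₁₁ * g₂₂ - 2 * (w₁₂ * g₁₂) + w₂₂ * g₁₁) / (g₁₁ * g₂₂ - g₁₂ ^ 2) :=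
  calc w₁₁ / g₁₁ + w₂₂ / g₂₂ = (w₁₁ * g₂₂ + w₂₂ * g₁₁) / (g₁₁ * g₂₂) := by
        field_simp
    _ ≤ (w₁₁ * g₂₂ + w₂₂ * g₁₁) / (g₁₁ * g₂₂ - g₁₂ ^ 2) :=
        div_le_div_of_nonneg_left (by positivity) hdet (by nlinarith)
    _ ≤ (w₁₁ * g₂₂ - 2 * (w₁₂ * g₁₂) + w₂₂ * g₁₁) / (g₁₁ * g₂₂ - g₁₂ ^ 2) := by
        gcongr; linarith

theorem stmt_13 (G : Matrix (Fin 2) (Fin 2) ℝ) (a b w₁₁ w₁₂ w₂₂ : ℝ)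
    (hG : G.PosDef) (ha : 0 < a) (hb : 0 < b)
    (hG11 : G 0 0 ≤ a) (hG22 : G 1 1 ≤ b)
    (hW : (!![w₁₁, w₁₂; w₁₂, w₂₂] : Matrix (Fin 2) (Fin 2) ℝ).PosDef)
    (hwG : w₁₂ * G 0 1 ≤ 0) :
    (!![w₁₁, w₁₂; w₁₂, w₂₂] * G⁻¹).trace ≥ w₁₁ / a + w₂₂ / b
    ∧ w₁₁ / a + w₂₂ / b
        = (!![w₁₁, w₁₂; w₁₂, w₂₂] * (Matrix.diagonal ![a, b])⁻¹).trace := by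
  have hG₁₁ : 0 < G 0 0 := hG.diag_pos
  have hG₂₂ : 0 < G 1 1 := hG.diag_pos
  have hw₁₁ : 0 < w₁₁ := hW.diag_pos (i := 0)
  have hw₂₂ : 0 < w₂₂ := hW.diag_pos (i := 1)
  have hsymm : G 1 0 = G 0 1 := hG.isHermitian.apply 0 1
  have hdet : G.det = G 0 0 * G 1 1 - G 0 1 ^ 2 := by rw [det_fin_two, hsymm, sq]
  refine ⟨?_, ?_⟩
  · calc w₁₁ / a + w₂₂ / b ≤ w₁₁ / G 0 0 + w₂₂ / G 1 1 := by gcongr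
      _ ≤ (w₁₁ * G 1 1 - 2 * (w₁₂ * G 0 1) + w₂₂ * G 0 0) / G.det := by
          rw [hdet]
          exact div_add_div_le_div_sub_sq hG₁₁ hG₂₂ (hdet ▸ hG.det_pos) hw₁₁.le hw₂₂.le hwG
      _ = (!![w₁₁, w₁₂; w₁₂, w₂₂] * G⁻¹).trace := by
          rw [trace_mul_inv_fin_two, hsymm]
          simp only [of_apply, cons_val', cons_val_zero, cons_val_one, empty_val', cons_val_fin_one]
          ring
  · rw [trace_mul_inv_diagonal _ (by simp [Fin.forall_fin_two, ha.ne', hb.ne'])]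
    simp [Fin.sum_univ_two]
end

section
/- Let a₁ = (1,0,0), a₂ = (cos θ, sin θ, 0) ∈ ℝ³ with θ ∈ (0, π), let φ₁, φ₂ ∈ ℝ not both zero, f₁ = φ₁ cos θ + φ₂, f₂ = φ₁ + φ₂ cos θ, s = φ₁f₂ + φ₂f₁ > 0, and define η₁ = −a₁ + (φ₂/s^{3/2})(√s − sin√s)(f₁a₁ − f₂a₂) − (2φ₂/s) sin²(√s/2)(a₁×a₂), and η₂ = −a₂ − (φ₁/s^{3/2})(√s − sin√s)(f₁a₁ − f₂a₂) + (2φ₁/s) sin²(√s/2)(a₁×a₂). Then (η₁×η₂)·n = 0, where n = (φ₁ + φ₂ cos θ, φ₂ sin θ, 0)/√s. -/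
/-!
Both vectors have the shape `ηᵢ = -aᵢ ± φⱼ u` for one common vector `u`, so
`η₁ × η₂ = a₁ × a₂ + (φ₁ a₁ + φ₂ a₂) × u`, and `n` is a multiple of `φ₁ a₁ + φ₂ a₂`.
Both summands are orthogonal to `φ₁ a₁ + φ₂ a₂`, whatever `u` is.
-/

open Real Matrix

theorem neg_add_smul_cross_neg_sub_smul {R : Type*} [CommRing R] (a₁ a₂ u : Fin 3 → R)
    (φ₁ φ₂ : R) :
    (-a₁ + φ₂ • u) ⨯₃ (-a₂ - φ₁ • u) = a₁ ⨯₃ a₂ + (φ₁ • a₁ + φ₂ • a₂) ⨯₃ u := by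
  simp only [sub_eq_add_neg, map_add, LinearMap.add_apply, map_neg, LinearMap.neg_apply,
    map_smul, LinearMap.smul_apply, cross_self, smul_zero, add_zero]
  rw [← cross_anticomm a₂ u]
  module

theorem neg_add_smul_cross_neg_sub_smul_dotProduct_eq_zero {R : Type*} [CommRing R]
    (a₁ a₂ u : Fin 3 → R) (φ₁ φ₂ : R) :
    ((-a₁ + φ₂ • u) ⨯₃ (-a₂ - φ₁ • u)) ⬝ᵥ (φ₁ • a₁ + φ₂ • a₂) = 0 := by
  rw [neg_add_smul_cross_neg_sub_smul, add_dotProduct, dotProduct_comm,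
    dotProduct_comm _ (φ₁ • a₁ + φ₂ • a₂), dot_self_cross, add_zero]
  simp only [add_dotProduct, smul_dotProduct, dot_self_cross, dot_cross_self, smul_zero, add_zero]

theorem stmt_18_general (θ φ₁ φ₂ : ℝ)
    (a₁ a₂ : Fin 3 → ℝ) (ha₁ : a₁ = ![1, 0, 0]) (ha₂ : a₂ = ![Real.cos θ, Real.sin θ, 0])
    (f₁ f₂ s : ℝ)
    (η₁ η₂ n : Fin 3 → ℝ)
    (hη₁ : η₁ = -a₁
      + (φ₂ / Real.sqrt s ^ 3 * (Real.sqrt s - Real.sin (Real.sqrt s))) • (f₁ • a₁ - f₂ • a₂)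
      - (2 * φ₂ / s * Real.sin (Real.sqrt s / 2) ^ 2) • (a₁ ⨯₃ a₂))
    (hη₂ : η₂ = -a₂
      - (φ₁ / Real.sqrt s ^ 3 * (Real.sqrt s - Real.sin (Real.sqrt s))) • (f₁ • a₁ - f₂ • a₂)
      + (2 * φ₁ / s * Real.sin (Real.sqrt s / 2) ^ 2) • (a₁ ⨯₃ a₂))
    (hn : n = (Real.sqrt s)⁻¹ • ![φ₁ + φ₂ * Real.cos θ, φ₂ * Real.sin θ, 0]) :
    (η₁ ⨯₃ η₂) ⬝ᵥ n = 0 := by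
  set u : Fin 3 → ℝ :=
    ((Real.sqrt s - Real.sin (Real.sqrt s)) / Real.sqrt s ^ 3) • (f₁ • a₁ - f₂ • a₂)
      - (2 / s * Real.sin (Real.sqrt s / 2) ^ 2) • (a₁ ⨯₃ a₂)
  have hη₁u : η₁ = -a₁ + φ₂ • u := by rw [hη₁]; module
  have hη₂u : η₂ = -a₂ - φ₁ • u := by rw [hη₂]; module
  have hn_axis : n = (Real.sqrt s)⁻¹ • (φ₁ • a₁ + φ₂ • a₂) := by
    rw [hn, ha₁, ha₂]
    congr 1
    ext i
    fin_cases i <;> simp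
  rw [hη₁u, hη₂u, hn_axis, dotProduct_smul,
    neg_add_smul_cross_neg_sub_smul_dotProduct_eq_zero, smul_zero]

theorem stmt_18 (θ φ₁ φ₂ : ℝ) (hθ : θ ∈ Set.Ioo 0 π) (hφ : ¬(φ₁ = 0 ∧ φ₂ = 0))
    (a₁ a₂ : Fin 3 → ℝ) (ha₁ : a₁ = ![1, 0, 0]) (ha₂ : a₂ = ![Real.cos θ, Real.sin θ, 0])
    (f₁ f₂ s : ℝ) (hf₁ : f₁ = φ₁ * Real.cos θ + φ₂) (hf₂ : f₂ = φ₁ + φ₂ * Real.cos θ)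
    (hs : s = φ₁ * f₂ + φ₂ * f₁) (hspos : 0 < s)
    (η₁ η₂ n : Fin 3 → ℝ)
    (hη₁ : η₁ = -a₁
      + (φ₂ / Real.sqrt s ^ 3 * (Real.sqrt s - Real.sin (Real.sqrt s))) • (f₁ • a₁ - f₂ • a₂)
      - (2 * φ₂ / s * Real.sin (Real.sqrt s / 2) ^ 2) • (a₁ ⨯₃ a₂))
    (hη₂ : η₂ = -a₂
      - (φ₁ / Real.sqrt s ^ 3 * (Real.sqrt s - Real.sin (Real.sqrt s))) • (f₁ • a₁ - f₂ • a₂)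
      + (2 * φ₁ / s * Real.sin (Real.sqrt s / 2) ^ 2) • (a₁ ⨯₃ a₂))
    (hn : n = (Real.sqrt s)⁻¹ • ![φ₁ + φ₂ * Real.cos θ, φ₂ * Real.sin θ, 0]) :
    (η₁ ⨯₃ η₂) ⬝ᵥ n = 0 :=
  stmt_18_general θ φ₁ φ₂ a₁ a₂ ha₁ ha₂ f₁ f₂ s η₁ η₂ n hη₁ hη₂ hn
end
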